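/- There is a universal constant C such that for all sufficiently large W the following holds. Let 0 ≤ a < b < c ≤ 1 satisfy min(c − b, b − a) > 1/log log W, and define g_{a,b,c}(x) = log log( (exp(c·e^x) − exp(a·e^x)) / (exp(b·e^x) − exp(a·e^x)) ). Then for every x ∈ [log log W, 2 log log W]: (i) g_{a,b,c}(x) ≤ x; (ii) |g_{a,b,c}(x) − x| ≤ log log log W + C; and (iii) g_{a,b,c} is differentiable at x with |g′_{a,b,c}(x) − 1| ≤ C/(log log W). -/

import Mathlib

/-- The function `g_{a,b,c}(x) = log log((exp(c·eˣ) − exp(a·eˣ))/(exp(b·eˣ) − exp(a·eˣ)))`. -/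
noncomputable def gFun (a b c x : ℝ) : ℝ :=
  Real.log (Real.log ((Real.exp (c * Real.exp x) - Real.exp (a * Real.exp x)) /
    (Real.exp (b * Real.exp x) - Real.exp (a * Real.exp x))))

/-- For `0 ≤ y ≤ 1/2`, `log(1-y) ≥ -2y`. -/
lemma aux_log_one_sub_ge {y : ℝ} (h0 : 0 ≤ y) (h2 : y ≤ 1/2) : -(2*y) ≤ Real.log (1 - y) := by
  have hy1 : 0 < 1 - y := by linarith
  have h1 : 1 + 2*y ≤ Real.exp (2*y) := by linarith [Real.add_one_le_exp (2*y)]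
  have h : Real.exp (-(2*y)) ≤ 1 - y := by
    rw [Real.exp_neg, inv_le_iff_one_le_mul₀ (Real.exp_pos _)]
    nlinarith
  calc -(2*y) = Real.log (Real.exp (-(2*y))) := (Real.log_exp _).symm
  _ ≤ Real.log (1 - y) := Real.log_le_log (Real.exp_pos _) h


section auxLemmas

private lemma aux1 {L t : ℝ} (hL : 50 ≤ L) (ht : L^4/256 ≤ t) : 8*L*L ≤ t := by
  nlinarith [sq_nonneg L, sq_nonneg (L^2 - 2048), mul_le_mul_of_nonneg_right
    (by nlinarith : (2500:ℝ) ≤ L^2) (sq_nonneg L)]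

private lemma aux2 {e E : ℝ} (he : 0 < e) (hprod : e * E = 1) (hE : 2 ≤ E) : e ≤ 1/2 := by
  nlinarith

private lemma aux3 {A E : ℝ} (hA : 1 ≤ A) (hE : 2 ≤ E) : 1 ≤ A * (E - 1) := by nlinarith

private lemma aux4 {N D : ℝ} (hN : 0 < N) (hD : 1 ≤ D) : N ≤ N * D := by nlinarith

private lemma aux5 {c t : ℝ} (hc : c ≤ 1) (ht : 0 < t) : c * t ≤ t := by nlinarith

private lemma aux6 {v e1 : ℝ} (hv : 1 ≤ v) (he1 : 2 ≤ e1) : v + 1 ≤ v * e1 := by nlinarith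

private lemma aux8 {A e E : ℝ} (hA : 1 ≤ A) (he : 0 < e) (hprod : e * E = 1) (hE : 2 ≤ E) :
    A ≤ 2*e*(A*(E-1)) := by
  have h1 : e ≤ 1/2 := aux2 he hprod hE
  have h2 : e*E*A = A := by rw [hprod, one_mul]
  have h3 : e*A ≤ (1/2)*A := mul_le_mul_of_nonneg_right h1 (by linarith)
  nlinarith [h2, h3]

private lemma aux10 {L s v E : ℝ} (hL : 50 ≤ L) (hs : 8*L < s) (hv : s/2 + 1 ≤ v)
    (hE : v^2 = E) : 16*L^2 ≤ E := by nlinarith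

private lemma aux11 {L e E : ℝ} (hL : 0 < L) (he : 0 < e) (hprod : e * E = 1)
    (hE : 16*L^2 ≤ E) : 8*L*e*L ≤ 1 := by
  nlinarith [mul_le_mul_of_nonneg_right hE he.le]

end auxLemmas

set_option maxHeartbeats 1000000 in
/-- **Claim 3.9.** There is a universal constant `C` such that for all sufficiently large
`W` the following holds for all well-separated `0 ≤ a < b < c ≤ 1` (i.e.,
`min(c − b, b − a) > 1/log log W`) and all `x ∈ [log log W, 2 log log W]`:
(i) `g_{a,b,c}(x) ≤ x`; (ii) `|g_{a,b,c}(x) − x| ≤ log log log W + C`; and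
(iii) `g_{a,b,c}` is differentiable at `x` with derivative within `C/log log W` of `1`. -/
theorem gFun_approximates_identity :
    ∃ C W₀ : ℝ, 0 < C ∧
      ∀ W : ℝ, W₀ ≤ W →
        ∀ a b c : ℝ, 0 ≤ a → a < b → b < c → c ≤ 1 →
          1 / Real.log (Real.log W) < min (c - b) (b - a) →
          ∀ x ∈ Set.Icc (Real.log (Real.log W)) (2 * Real.log (Real.log W)),
            gFun a b c x ≤ x ∧
            |gFun a b c x - x| ≤ Real.log (Real.log (Real.log W)) + C ∧
            ∃ g' : ℝ, HasDerivAt (gFun a b c) g' x ∧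
              |g' - 1| ≤ C / Real.log (Real.log W) := by
  refine ⟨1, Real.exp (Real.exp 50), one_pos, ?_⟩
  intro W hW a b c ha hab hbc hc1 hsep x hx
  obtain ⟨hx1, hx2⟩ := hx
  set L : ℝ := Real.log (Real.log W) with hLdef
  -- `L ≥ 50`
  have hlogW : Real.exp 50 ≤ Real.log W := by
    have := Real.log_le_log (Real.exp_pos _) hW
    rwa [Real.log_exp] at this
  have hL50 : (50:ℝ) ≤ L := by
    have := Real.log_le_log (Real.exp_pos 50) hlogW
    rwa [Real.log_exp] at this
  have hLpos : (0:ℝ) < L := by linarith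
  set t : ℝ := Real.exp x with htdef
  have htpos : 0 < t := Real.exp_pos x
  have hxt : x = Real.log t := (Real.log_exp x).symm
  have hcb : 1 / L < c - b := lt_of_lt_of_le hsep (min_le_left _ _)
  have hba : 1 / L < b - a := lt_of_lt_of_le hsep (min_le_right _ _)
  have hLinv : 0 < 1 / L := by positivity
  have hcbpos : 0 < c - b := lt_trans hLinv hcb
  have hbapos : 0 < b - a := lt_trans hLinv hba
  -- `t ≥ exp L ≥ L⁴/256`
  have htL : Real.exp L ≤ t := Real.exp_le_exp.mpr hx1
  have hexpL : L^4/256 ≤ Real.exp L := by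
    have h4 : L/4 + 1 ≤ Real.exp (L/4) := Real.add_one_le_exp _
    have h4' : (L/4)^4 ≤ (Real.exp (L/4))^4 := by
      apply pow_le_pow_left₀ (by linarith) (by linarith)
    have hE : (Real.exp (L/4))^4 = Real.exp L := by
      rw [← Real.exp_nat_mul]; congr 1; push_cast; ring
    calc L^4/256 = (L/4)^4 := by ring
    _ ≤ (Real.exp (L/4))^4 := h4'
    _ = Real.exp L := hE
  have ht4 : L^4/256 ≤ t := le_trans hexpL htL
  have h8L : 8*L ≤ t / L := by
    rw [le_div_iff₀ hLpos]
    exact aux1 hL50 ht4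
  set s : ℝ := (b - a) * t with hsdef
  set u : ℝ := (c - b) * t with hudef
  have hts : t / L < s := by
    calc t / L = (1/L) * t := by ring
    _ < (b - a) * t := by exact mul_lt_mul_of_pos_right hba htpos
  have htu : t / L < u := by
    calc t / L = (1/L) * t := by ring
    _ < (c - b) * t := by exact mul_lt_mul_of_pos_right hcb htpos
  have hs8 : 8*L < s := lt_of_le_of_lt h8L hts
  have hu8 : 8*L < u := lt_of_le_of_lt h8L htu
  have hs400 : (400:ℝ) < s := by linarith
  have hu400 : (400:ℝ) < u := by linarith
  have ht1 : (1:ℝ) ≤ t := by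
    have := Real.add_one_le_exp L
    linarith
  -- main quantities
  set A : ℝ := Real.exp (a*t) with hAdef
  set B : ℝ := Real.exp (b*t) with hBdef
  set Cx : ℝ := Real.exp (c*t) with hCxdef
  have hApos : 0 < A := Real.exp_pos _
  have hBpos : 0 < B := Real.exp_pos _
  have hCxpos : 0 < Cx := Real.exp_pos _
  have hA1 : 1 ≤ A := Real.one_le_exp (by positivity)
  have hAB : A < B := Real.exp_lt_exp.mpr (mul_lt_mul_of_pos_right hab htpos)
  have hBC : B < Cx := Real.exp_lt_exp.mpr (mul_lt_mul_of_pos_right hbc htpos)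
  set D : ℝ := B - A with hDdef
  set N : ℝ := Cx - A with hNdef
  have hDpos : 0 < D := sub_pos.mpr hAB
  have hNpos : 0 < N := sub_pos.mpr (lt_trans hAB hBC)
  have hDN : D < N := sub_lt_sub_right hBC A
  have hBA : B = A * Real.exp s := by
    rw [hBdef, hAdef, hsdef, ← Real.exp_add]
    congr 1; ring
  have hDfac : D = A * (Real.exp s - 1) := by
    rw [hDdef, hBA]; ring
  have hes2 : (2:ℝ) ≤ Real.exp s := by
    have := Real.add_one_le_exp s; linarith
  have hesneg : Real.exp (-s) ≤ 1/2 := by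
    have h3 : Real.exp (-s) * Real.exp s = 1 := by rw [← Real.exp_add]; simp
    exact aux2 (Real.exp_pos _) h3 hes2
  have hD1 : 1 ≤ D := by rw [hDfac]; exact aux3 hA1 hes2
  have hR1 : 1 < N / D := (one_lt_div hDpos).mpr hDN
  have hRpos : 0 < N / D := lt_trans one_pos hR1
  set ℓ : ℝ := Real.log (N / D) with hldef
  have hlpos : 0 < ℓ := Real.log_pos hR1
  -- upper bound `ℓ ≤ t`
  have hlle : ℓ ≤ t := by
    have h1 : N / D ≤ N := by
      rw [div_le_iff₀ hDpos]; exact aux4 hNpos hD1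
    have h2 : ℓ ≤ Real.log N := Real.log_le_log hRpos h1
    have h3 : Real.log N ≤ Real.log Cx := Real.log_le_log hNpos (by rw [hNdef]; linarith)
    have h4 : Real.log Cx = c*t := by rw [hCxdef, Real.log_exp]
    have h5 : c*t ≤ t := aux5 hc1 htpos
    linarith
  -- lower bound `t/(2L) ≤ ℓ`
  have hexpu2 : (2:ℝ) ≤ Real.exp u := by
    have := Real.add_one_le_exp u; linarith
  have hlge' : u - 1 ≤ ℓ := by
    have hCB : Cx / B = Real.exp u := by
      rw [hCxdef, hBdef, ← Real.exp_sub, hudef]; congr 1; ring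
    have hAB' : A / B = Real.exp (-s) := by
      rw [hAdef, hBdef, ← Real.exp_sub, hsdef]; congr 1; ring
    have hNB : Real.exp u - Real.exp (-s) = N / B := by
      rw [hNdef, sub_div, hCB, hAB']
    have he1 : Real.exp (u - 1) ≤ Real.exp u - 1 := by
      have hee : Real.exp (u-1) * Real.exp 1 = Real.exp u := by rw [← Real.exp_add]; ring_nf
      have h2e : (2:ℝ) ≤ Real.exp 1 := by linarith [Real.add_one_le_exp 1]
      have hv : 1 ≤ Real.exp (u-1) := Real.one_le_exp (by linarith)
      have := aux6 hv h2e
      linarith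
    have hNBle : N / B ≤ N / D := by
      rw [div_le_div_iff₀ hBpos hDpos]
      have hDB : D ≤ B := by rw [hDdef]; linarith
      exact mul_le_mul_of_nonneg_left hDB hNpos.le
    have : Real.exp (u - 1) ≤ N / D := by
      have hexpns : 0 < Real.exp (-s) := Real.exp_pos _
      calc Real.exp (u-1) ≤ Real.exp u - 1 := he1
      _ ≤ Real.exp u - Real.exp (-s) := by linarith
      _ = N / B := hNB
      _ ≤ N / D := hNBle
    calc u - 1 = Real.log (Real.exp (u-1)) := (Real.log_exp _).symm
    _ ≤ ℓ := Real.log_le_log (Real.exp_pos _) this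
  have hlge : t/(2*L) ≤ ℓ := by
    have : t/(2*L) + 1 ≤ u := by
      have h1 : t/(2*L) ≤ (t/L)/2 + 0 := by rw [div_div]; ring_nf; linarith [le_refl (t/(2*L))]
      have h2 : (t/L)/2 + 1 ≤ t/L := by
        have : 2 ≤ t/L := by linarith
        linarith
      linarith
    linarith
  -- the function equals log ℓ at x
  have hgFun : gFun a b c x = Real.log ℓ := rfl
  -- Part (i)
  have hpart1 : gFun a b c x ≤ x := by
    rw [hgFun, hxt]
    exact Real.log_le_log hlpos hlle
  -- Part (ii)
  have hlog2 : Real.log 2 ≤ 1 := by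
    have h2e : (2:ℝ) ≤ Real.exp 1 := by linarith [Real.add_one_le_exp 1]
    calc Real.log 2 ≤ Real.log (Real.exp 1) := Real.log_le_log two_pos h2e
    _ = 1 := Real.log_exp 1
  have hglow : x - (Real.log L + 1) ≤ gFun a b c x := by
    rw [hgFun, hxt]
    have h1 : Real.log (t/(2*L)) ≤ Real.log ℓ := Real.log_le_log (by positivity) hlge
    have h2 : Real.log (t/(2*L)) = Real.log t - (Real.log 2 + Real.log L) := by
      rw [Real.log_div htpos.ne' (by positivity), Real.log_mul two_ne_zero hLpos.ne']
    linarith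
  have hpart2 : |gFun a b c x - x| ≤ Real.log L + 1 := by
    rw [abs_le]; constructor <;> linarith
  refine ⟨hpart1, hpart2, ?_⟩
  -- Part (iii): the derivative
  set Np : ℝ := Cx * (c*t) - A * (a*t) with hNpdef
  set Dp : ℝ := B * (b*t) - A * (a*t) with hDpdef
  have hdA : HasDerivAt (fun y => Real.exp (a * Real.exp y)) (A * (a * t)) x :=
    ((Real.hasDerivAt_exp x).const_mul a).exp
  have hdB : HasDerivAt (fun y => Real.exp (b * Real.exp y)) (B * (b * t)) x :=
    ((Real.hasDerivAt_exp x).const_mul b).exp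
  have hdC : HasDerivAt (fun y => Real.exp (c * Real.exp y)) (Cx * (c * t)) x :=
    ((Real.hasDerivAt_exp x).const_mul c).exp
  have hdN : HasDerivAt (fun y => Real.exp (c * Real.exp y) - Real.exp (a * Real.exp y)) Np x :=
    hdC.sub hdA
  have hdD : HasDerivAt (fun y => Real.exp (b * Real.exp y) - Real.exp (a * Real.exp y)) Dp x :=
    hdB.sub hdA
  have hDne : D ≠ 0 := hDpos.ne'
  have hNne : N ≠ 0 := hNpos.ne'
  have hdQ : HasDerivAt (fun y => (Real.exp (c * Real.exp y) - Real.exp (a * Real.exp y)) /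
      (Real.exp (b * Real.exp y) - Real.exp (a * Real.exp y))) ((Np * D - N * Dp) / D^2) x :=
    hdN.div hdD hDne
  have hdlog : HasDerivAt (fun y => Real.log ((Real.exp (c * Real.exp y) - Real.exp (a * Real.exp y)) /
      (Real.exp (b * Real.exp y) - Real.exp (a * Real.exp y)))) ((Np * D - N * Dp) / D^2 / (N/D)) x :=
    hdQ.log hRpos.ne'
  have hdg : HasDerivAt (gFun a b c) ((Np * D - N * Dp) / D^2 / (N/D) / ℓ) x :=
    hdlog.log hlpos.ne'
  refine ⟨_, hdg, ?_⟩
  -- rewrite the derivative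
  have hrw : (Np * D - N * Dp) / D^2 / (N/D) / ℓ - 1 = ((Np/N - Dp/D) - ℓ) / ℓ := by
    field_simp
  rw [hrw]
  -- the numerator pieces
  have hNid : Np/N = c*t + (c-a)*t*(A/N) := by
    rw [hNpdef, hNdef]
    have hN' : Cx - A ≠ 0 := hNne
    field_simp
    ring
  have hDid : Dp/D = b*t + (b-a)*t*(A/D) := by
    rw [hDpdef, hDdef]
    have hD' : B - A ≠ 0 := hDne
    field_simp
    ring
  have hADle : A/D ≤ 2*Real.exp (-s) := by
    rw [hDfac]
    rw [div_le_iff₀ (mul_pos hApos (by linarith : (0:ℝ) < Real.exp s - 1))]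
    have h3 : Real.exp (-s) * Real.exp s = 1 := by rw [← Real.exp_add]; simp
    exact aux8 hA1 (Real.exp_pos _) h3 hes2
  have hANle : A/N ≤ A/D := by
    rw [div_le_div_iff₀ hNpos hDpos]
    exact mul_le_mul_of_nonneg_left hDN.le hApos.le
  have hANpos : 0 < A/N := by positivity
  have hADpos : 0 < A/D := by positivity
  -- |ν - u| ≤ 2t e^{-s}
  have hca1 : c - a ≤ 1 := by linarith
  have hba1 : b - a ≤ 1 := by linarith
  have hnu_ub : (Np/N - Dp/D) - u ≤ 2*t*Real.exp (-s) := by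
    rw [hNid, hDid, hudef]
    have h1 : (c-a)*t*(A/N) ≤ t*(A/D) := by
      have ha1 : (c-a)*t*(A/N) ≤ 1*t*(A/N) := by
        apply mul_le_mul_of_nonneg_right _ hANpos.le
        have : c - a ≤ 1 := by linarith
        exact mul_le_mul_of_nonneg_right this htpos.le
      have ha2 := mul_le_mul_of_nonneg_left hANle htpos.le
      linarith
    have h2 : 0 ≤ (b-a)*t*(A/D) := mul_nonneg (mul_nonneg (by linarith) htpos.le) hADpos.le
    have h3 := mul_le_mul_of_nonneg_left hADle htpos.le
    linarith
  have hnu_lb : -(2*t*Real.exp (-s)) ≤ (Np/N - Dp/D) - u := by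
    rw [hNid, hDid, hudef]
    have h1 : 0 ≤ (c-a)*t*(A/N) := mul_nonneg (mul_nonneg (by linarith) htpos.le) hANpos.le
    have h2 : (b-a)*t*(A/D) ≤ t*(A/D) := by
      have hb1 : (b-a)*t*(A/D) ≤ 1*t*(A/D) := by
        apply mul_le_mul_of_nonneg_right _ hADpos.le
        have : b - a ≤ 1 := by linarith
        exact mul_le_mul_of_nonneg_right this htpos.le
      linarith
    have h3 := mul_le_mul_of_nonneg_left hADle htpos.le
    linarith
  -- |ℓ - u| ≤ 4 e^{-s}
  have hy1 : A/Cx = Real.exp (a*t - c*t) := by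
    rw [hAdef, hCxdef, ← Real.exp_sub]
  have hy2 : A/B = Real.exp (-s) := by
    rw [hAdef, hBdef, ← Real.exp_sub, hsdef]; congr 1; ring
  have hy1pos : 0 < A/Cx := by positivity
  have hy1le : A/Cx ≤ Real.exp (-s) := by
    rw [hy1]
    apply Real.exp_le_exp.mpr
    rw [hsdef]
    have : (b-a)*t ≤ (c-a)*t := mul_le_mul_of_nonneg_right (by linarith) htpos.le
    linarith
  have hy1half : A/Cx ≤ 1/2 := le_trans hy1le hesneg
  have hy2half : A/B ≤ 1/2 := by rw [hy2]; exact hesneg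
  have hy2pos : 0 < A/B := by positivity
  have hlogN : Real.log N = c*t + Real.log (1 - A/Cx) := by
    have hfac : N = Cx * (1 - A/Cx) := by
      rw [hNdef]; field_simp
    rw [hfac, Real.log_mul hCxpos.ne' (by linarith : (1:ℝ) - A/Cx ≠ 0)]
    rw [hCxdef, Real.log_exp]
  have hlogD : Real.log D = b*t + Real.log (1 - A/B) := by
    have hfac : D = B * (1 - A/B) := by
      rw [hDdef]; field_simp
    rw [hfac, Real.log_mul hBpos.ne' (by linarith : (1:ℝ) - A/B ≠ 0)]
    rw [hBdef, Real.log_exp]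
  have hleq : ℓ = u + (Real.log (1 - A/Cx) - Real.log (1 - A/B)) := by
    rw [hldef, Real.log_div hNne hDne, hlogN, hlogD, hudef]; ring
  have hlog1 : -(2*(A/Cx)) ≤ Real.log (1 - A/Cx) := aux_log_one_sub_ge hy1pos.le hy1half
  have hlog1' : Real.log (1 - A/Cx) ≤ 0 := Real.log_nonpos (by linarith) (by linarith)
  have hlog2' : -(2*(A/B)) ≤ Real.log (1 - A/B) := aux_log_one_sub_ge hy2pos.le hy2half
  have hlog2'' : Real.log (1 - A/B) ≤ 0 := Real.log_nonpos (by linarith) (by linarith)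
  have hlu_ub : ℓ - u ≤ 2*Real.exp (-s) := by
    have h1 : Real.log (1 - A/Cx) - Real.log (1 - A/B) ≤ 2*(A/B) := by linarith
    have h2 : (2:ℝ)*(A/B) = 2*Real.exp (-s) := by rw [hy2]
    rw [hleq]; linarith
  have hlu_lb : -(2*Real.exp (-s)) ≤ ℓ - u := by
    have h1 : -(2*(A/Cx)) ≤ Real.log (1 - A/Cx) - Real.log (1 - A/B) := by linarith
    have h2 : (2:ℝ)*(A/Cx) ≤ 2*Real.exp (-s) := by linarith
    rw [hleq]; linarith
  -- combine
  have hnum : |(Np/N - Dp/D) - ℓ| ≤ 4*t*Real.exp (-s) := by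
    have hte : 0 ≤ (t - 1) * Real.exp (-s) :=
      mul_nonneg (by linarith) (Real.exp_pos (-s)).le
    rw [abs_le]
    have hep := (Real.exp_pos (-s)).le
    constructor
    · linarith
    · linarith
  rw [abs_div, abs_of_pos hlpos]
  have hden : 0 < t/(2*L) := by positivity
  calc |(Np/N - Dp/D) - ℓ| / ℓ ≤ (4*t*Real.exp (-s)) / (t/(2*L)) :=
        div_le_div₀ (by positivity) hnum hden hlge
  _ = 8*L*Real.exp (-s) := by field_simp; ring
  _ ≤ 1/L := by
      have hsq : Real.exp (s/2) ^ 2 = Real.exp s := by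
        rw [sq, ← Real.exp_add]; congr 1; ring
      have h1 : s/2 + 1 ≤ Real.exp (s/2) := Real.add_one_le_exp _
      have h2 : 16*L^2 ≤ Real.exp s := aux10 hL50 hs8 h1 hsq
      have h3 : Real.exp (-s) * Real.exp s = 1 := by rw [← Real.exp_add]; simp
      rw [le_div_iff₀ hLpos]
      exact aux11 hLpos (Real.exp_pos _) h3 h2
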